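/- arXiv:2211.08907 — 2 statements merged into one kernel-verified Lean document; each statement's English description precedes it below -/
import Mathlib

section
/- For all n ≥ 1, the pairs (x, w) = (B_{n−1} + C_{n−1}, 8B_{n−1} + C_{n−1}) and (x, w) = (−B_n + C_n, 8B_n − C_n) satisfy 8x² − w² = 7, and every positive integer solution of 8x² − w² = 7 arises (up to sign of w) in one of these two families. -/
def B : ℕ → ℤ
  | 0 => 0
  | 1 => 1
  | (n+2) => 6 * B (n+1) - B n

def C : ℕ → ℤ
  | 0 => 1
  | 1 => 3
  | (n+2) => 6 * C (n+1) - C n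

def b : ℕ → ℤ
  | 0 => 0
  | 1 => 0
  | (n+2) => 6 * b (n+1) - b n + 2

def c : ℕ → ℤ
  | 0 => -1
  | 1 => 1
  | (n+2) => 6 * c (n+1) - c n

def P : ℕ → ℤ
  | 0 => 0
  | 1 => 1
  | (n+2) => 2 * P (n+1) + P n

lemma BC_step (n : ℕ) : B (n+1) = 3 * B n + C n ∧ C (n+1) = 8 * B n + 3 * C n := by
  induction n with
  | zero => constructor <;> rfl
  | succ n ih =>
    obtain ⟨h1, h2⟩ := ih
    have hB : B (n+2) = 6 * B (n+1) - B n := rfl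
    have hC : C (n+2) = 6 * C (n+1) - C n := rfl
    constructor
    · rw [hB]; linarith
    · rw [hC]; linarith

lemma pell_BC (n : ℕ) : C n ^ 2 - 8 * B n ^ 2 = 1 := by
  induction n with
  | zero => rfl
  | succ n ih =>
    rw [(BC_step n).1, (BC_step n).2]
    linear_combination ih

lemma BC_pos (n : ℕ) : 0 ≤ B n ∧ 1 ≤ C n := by
  induction n with
  | zero => constructor <;> norm_num [B, C]
  | succ n ih =>
    obtain ⟨h1, h2⟩ := ih
    rw [(BC_step n).1, (BC_step n).2]
    constructor <;> linarith

lemma complete : ∀ k : ℕ, ∀ x w : ℤ, x ≤ (k : ℤ) → 0 < x → 0 < w → 8 * x ^ 2 - w ^ 2 = 7 →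
    ∃ n : ℕ, 1 ≤ n ∧
      ((x = B (n - 1) + C (n - 1) ∧
          (w = 8 * B (n - 1) + C (n - 1) ∨ w = -(8 * B (n - 1) + C (n - 1)))) ∨
       (x = -B n + C n ∧ (w = 8 * B n - C n ∨ w = -(8 * B n - C n)))) := by
  intro k
  induction k with
  | zero => intro x w hk hx _ _; exfalso; omega
  | succ k IH =>
    intro x w hk hx hw heq
    by_cases h1 : x = 1
    · subst h1
      have hw1 : w = 1 := by nlinarith
      exact ⟨1, le_refl 1, Or.inl ⟨by norm_num [B, C], Or.inl (by norm_num [B, C, hw1])⟩⟩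
    by_cases h2 : x = 2
    · subst h2
      have hw5 : w = 5 := by
        have h : (w - 5) * (w + 5) = 0 := by linarith
        rcases mul_eq_zero.mp h with h' | h' <;> omega
      refine ⟨1, le_refl 1, Or.inr ⟨?_, Or.inl ?_⟩⟩
      · norm_num [B, C]
      · norm_num [B, C, hw5]
    -- now x ≥ 3 : descent step
    have hx3 : 3 ≤ x := by omega
    have hw3 : w < 3 * x := by nlinarith
    have hx'pos : 0 < 3 * x - w := by linarith
    have hu : 0 < 3 * w - 8 * x := by nlinarith
    have h2x : 2 * x < w := by nlinarith
    have hlek : 3 * x - w ≤ (k : ℤ) := by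
      have : (↑(k + 1) : ℤ) = (k : ℤ) + 1 := by push_cast; ring
      omega
    have heq' : 8 * (3 * x - w) ^ 2 - (3 * w - 8 * x) ^ 2 = 7 := by linear_combination heq
    obtain ⟨n, hn1, hcase⟩ := IH (3 * x - w) (3 * w - 8 * x) hlek hx'pos hu heq'
    rcases hcase with ⟨hx', hw'⟩ | ⟨hx', hw'⟩
    · -- came from family 1 at index m+1 ⇒ (x, w) is family 1 at index m+2
      obtain ⟨m, rfl⟩ : ∃ m, n = m + 1 := ⟨n - 1, by omega⟩
      simp only [Nat.add_sub_cancel] at hx' hw'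
      obtain ⟨hBm, hCm⟩ := BC_pos m
      have hwpos : 3 * w - 8 * x = 8 * B m + C m := by
        rcases hw' with h | h
        · exact h
        · exfalso; linarith
      obtain ⟨hB1, hC1⟩ := BC_step m
      refine ⟨m + 2, by omega, Or.inl ⟨?_, Or.inl ?_⟩⟩
      · show x = B (m + 1) + C (m + 1)
        rw [hB1, hC1]; linarith
      · show w = 8 * B (m + 1) + C (m + 1)
        rw [hB1, hC1]; linarith
    · -- came from family 2 at index m+1 ⇒ (x, w) is family 2 at index m+2
      obtain ⟨m, rfl⟩ : ∃ m, n = m + 1 := ⟨n - 1, by omega⟩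
      obtain ⟨hBm, hCm⟩ := BC_pos m
      obtain ⟨hB1, hC1⟩ := BC_step m
      have hW2 : 1 ≤ 8 * B (m + 1) - C (m + 1) := by rw [hB1, hC1]; linarith
      have hwpos : 3 * w - 8 * x = 8 * B (m + 1) - C (m + 1) := by
        rcases hw' with h | h
        · exact h
        · exfalso; linarith
      obtain ⟨hB2, hC2⟩ := BC_step (m + 1)
      refine ⟨m + 2, by omega, Or.inr ⟨?_, Or.inl ?_⟩⟩
      · rw [hB2, hC2]; linarith
      · rw [hB2, hC2]; linarith

theorem pell_seven_solutions :
    (∀ n : ℕ, 1 ≤ n →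
      8 * (B (n - 1) + C (n - 1)) ^ 2 - (8 * B (n - 1) + C (n - 1)) ^ 2 = 7 ∧
      8 * (-B n + C n) ^ 2 - (8 * B n - C n) ^ 2 = 7) ∧
    (∀ x w : ℤ, 0 < x → 0 < w → 8 * x ^ 2 - w ^ 2 = 7 →
      ∃ n : ℕ, 1 ≤ n ∧
        ((x = B (n - 1) + C (n - 1) ∧
            (w = 8 * B (n - 1) + C (n - 1) ∨ w = -(8 * B (n - 1) + C (n - 1)))) ∨
         (x = -B n + C n ∧ (w = 8 * B n - C n ∨ w = -(8 * B n - C n))))) := by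
  constructor
  · intro n _
    constructor
    · linear_combination 7 * pell_BC (n - 1)
    · linear_combination 7 * pell_BC n
  · intro x w hx hw heq
    exact complete x.toNat x w (by omega) hx hw heq
end

section
/- For every n ≥ 1, 8·(3b_n + 1)² + 8·(3b_n + 1) − 7 = (3c_n)², i.e., 3b_n + 1 is an almost cobalancing number of second type with corresponding almost Lucas-cobalancing number 3c_n. -/
lemma key : ∀ n : ℕ, c n ^ 2 = 8 * b n ^ 2 + 8 * b n + 1 ∧
    c (n+1) * c n = 8 * b (n+1) * b n + 4 * (b n + b (n+1)) - 1 ∧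
    c (n+1) ^ 2 = 8 * b (n+1) ^ 2 + 8 * b (n+1) + 1 := by
  intro n
  induction n with
  | zero => simp [b, c]
  | succ k ih =>
    obtain ⟨h1, h2, h3⟩ := ih
    have hc : c (k+2) = 6 * c (k+1) - c k := rfl
    have hb : b (k+2) = 6 * b (k+1) - b k + 2 := rfl
    refine ⟨h3, ?_, ?_⟩ <;>
    · rw [show k+1+1 = k+2 from rfl, hc, hb]; nlinarith [h1, h2, h3]

theorem almost_cobalancing_second_type (n : ℕ) (hn : 1 ≤ n) :
    8 * (3 * b n + 1) ^ 2 + 8 * (3 * b n + 1) - 7 = (3 * c n) ^ 2 := by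
  have h := (key n).1
  nlinarith [h]
end
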